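/- arXiv:1112.3730 — 2 statements merged into one kernel-verified Lean document; each statement's English description precedes it below -/
import Mathlib

section
/- Lemma 1: For a multi-edge type D-GLDPC ensemble in which every variable-node and check-node local code has minimum distance at least 2 and no encoded bit is punctured, the all-ones vector 1 = (1,…,1) is a fixed point of the EXIT recursion for every erasure probability: f(1,ε) = 1 for all ε ∈ (0,1). -/
open scoped Classical

noncomputable section

namespace MET

/-- Hamming weight of a binary vector. -/
def hWeight {m : ℕ} (x : Fin m → ZMod 2) : ℕ :=
  (Finset.univ.filter fun i => x i ≠ 0).card

/-- The row space of `G` (the local code) has minimum Hamming weight at least 2. -/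
def HasMinDistGE2 {k q : ℕ} (G : Matrix (Fin k) (Fin q) (ZMod 2)) : Prop :=
  ∀ x : Fin k → ZMod 2, Matrix.vecMul x G ≠ 0 → 2 ≤ hWeight (Matrix.vecMul x G)

/-- The row space of `G` has minimum Hamming weight exactly 2. -/
def HasMinDistEq2 {k q : ℕ} (G : Matrix (Fin k) (Fin q) (ZMod 2)) : Prop :=
  HasMinDistGE2 G ∧ ∃ x : Fin k → ZMod 2, hWeight (Matrix.vecMul x G) = 2

/-- The weight-2 vector supported on `{i,j}`. -/
def wt2vec {q : ℕ} (i j : Fin q) : Fin q → ZMod 2 :=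
  fun r => if r = i ∨ r = j then 1 else 0

/-- Number of columns of edge type `l`. -/
def colCount {q n : ℕ} (τ : Fin q → Fin n) (l : Fin n) : ℕ :=
  (Finset.univ.filter fun j => τ j = l).card

/-- Rank of the matrix formed by the columns of `G` indexed by `A` together with the columns
of the `k × k` identity matrix indexed by `T`. -/
def colRank {k q : ℕ} (G : Matrix (Fin k) (Fin q) (ZMod 2))
    (A : Finset (Fin q)) (T : Finset (Fin k)) : ℕ :=
  Matrix.rank (Matrix.of fun (i : Fin k) (j : {x // x ∈ A} ⊕ {x // x ∈ T}) =>
    Sum.elim (fun a => G i a.1) (fun t => if i = t.1 then (1 : ZMod 2) else 0) j)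

/-- Multi-type split information function `ẽ_{g;u}` of a VN generator matrix. -/
def eTilde {n k q : ℕ} (G : Matrix (Fin k) (Fin q) (ZMod 2)) (τ : Fin q → Fin n)
    (g : Fin n → ℕ) (u : ℕ) : ℕ :=
  ∑ A ∈ Finset.univ.filter (fun A : Finset (Fin q) =>
      ∀ l, (A.filter fun j => τ j = l).card = g l),
    ∑ T ∈ Finset.univ.filter (fun T : Finset (Fin k) => T.card = u),
      colRank G A T

/-- Multi-type information function `ẽ_g` of a CN generator matrix. -/
def eTildeC {n h s : ℕ} (G : Matrix (Fin h) (Fin s) (ZMod 2)) (τ : Fin s → Fin n)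
    (g : Fin n → ℕ) : ℕ :=
  ∑ A ∈ Finset.univ.filter (fun A : Finset (Fin s) =>
      ∀ l, (A.filter fun j => τ j = l).card = g l),
    colRank G A ∅

/-- `χ_{2,u}(l,m)`: ordered pairs of distinct columns of types `l,m` supporting a weight-2
codeword generated by a weight-`u` input word. -/
def chi2 {n k q : ℕ} (G : Matrix (Fin k) (Fin q) (ZMod 2)) (τ : Fin q → Fin n)
    (u : ℕ) (l m : Fin n) : ℕ :=
  (Finset.univ.filter fun p : Fin q × Fin q =>
    p.1 ≠ p.2 ∧ τ p.1 = l ∧ τ p.2 = m ∧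
      ∃ x : Fin k → ZMod 2, hWeight x = u ∧ Matrix.vecMul x G = wt2vec p.1 p.2).card

/-- `ξ_2(l,m)`: ordered pairs of distinct coordinates of types `l,m` supporting a weight-2
codeword of the row space. -/
def xi2 {n h s : ℕ} (G : Matrix (Fin h) (Fin s) (ZMod 2)) (τ : Fin s → Fin n)
    (l m : Fin n) : ℕ :=
  (Finset.univ.filter fun p : Fin s × Fin s =>
    p.1 ≠ p.2 ∧ τ p.1 = l ∧ τ p.2 = m ∧
      ∃ x : Fin h → ZMod 2, Matrix.vecMul x G = wt2vec p.1 p.2).card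

/-- Range of the tuple `t`: `0 ≤ t l ≤ q l` for `l ≠ e` and `0 ≤ t e ≤ q e - 1`. -/
def tRange {n : ℕ} (q : Fin n → ℕ) (e : Fin n) : Finset (Fin n → ℕ) :=
  Fintype.piFinset fun l => Finset.range (if l = e then q l else q l + 1)

/-- The coefficient `a^{(γ,e)}_{t,z}` of the VN EXIT function. -/
def aVN {n k q : ℕ} (G : Matrix (Fin k) (Fin q) (ZMod 2)) (τ : Fin q → Fin n)
    (e : Fin n) (t : Fin n → ℕ) (z : ℕ) : ℝ :=
  ((colCount τ e - t e : ℕ) : ℝ) *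
      (eTilde G τ (fun l => colCount τ l - t l) (k - z) : ℝ)
    - ((t e + 1 : ℕ) : ℝ) *
      (eTilde G τ (fun l => colCount τ l - t l - (if l = e then 1 else 0)) (k - z) : ℝ)

/-- The coefficient `a^{(δ,e)}_{t}` of the CN EXIT function. -/
def aCN {n h s : ℕ} (G : Matrix (Fin h) (Fin s) (ZMod 2)) (τ : Fin s → Fin n)
    (e : Fin n) (t : Fin n → ℕ) : ℝ :=
  ((colCount τ e - t e : ℕ) : ℝ) *
      (eTildeC G τ (fun l => colCount τ l - t l) : ℝ)
    - ((t e + 1 : ℕ) : ℝ) *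
      (eTildeC G τ (fun l => colCount τ l - t l - (if l = e then 1 else 0)) : ℝ)

/-- Per-type VN EXIT function `I_{EV,e}^{(γ)}(I, ε)`. -/
def IEV {n k q : ℕ} (G : Matrix (Fin k) (Fin q) (ZMod 2)) (τ : Fin q → Fin n)
    (e : Fin n) (I : Fin n → ℝ) (ε : ℝ) : ℝ :=
  1 - (1 / (colCount τ e : ℝ)) *
    ∑ z ∈ Finset.range (k + 1), ε ^ z * (1 - ε) ^ (k - z) *
      ∑ t ∈ tRange (colCount τ) e,
        (∏ l, (1 - I l) ^ t l * (I l) ^ (colCount τ l - t l - (if l = e then 1 else 0))) *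
          aVN G τ e t z

/-- Per-type CN EXIT function `I_{EC,e}^{(δ)}(I)`. -/
def IEC {n h s : ℕ} (G : Matrix (Fin h) (Fin s) (ZMod 2)) (τ : Fin s → Fin n)
    (e : Fin n) (I : Fin n → ℝ) : ℝ :=
  1 - (1 / (colCount τ e : ℝ)) *
    ∑ t ∈ tRange (colCount τ) e,
      (∏ l, (1 - I l) ^ t l * (I l) ^ (colCount τ l - t l - (if l = e then 1 else 0))) *
        aCN G τ e t

/-- A variable node type: a `k × q` generator matrix over `GF(2)` with a typing of its
columns by edge types (no punctured bits). -/
structure VNType (n : ℕ) where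
  k : ℕ
  q : ℕ
  G : Matrix (Fin k) (Fin q) (ZMod 2)
  τ : Fin q → Fin n

/-- A check node type: an `h × s` generator matrix over `GF(2)` with a typing of its
columns by edge types. -/
structure CNType (n : ℕ) where
  h : ℕ
  s : ℕ
  G : Matrix (Fin h) (Fin s) (ZMod 2)
  τ : Fin s → Fin n

/-- The variable-node side of a MET D-GLDPC ensemble. -/
structure VNSide (n : ℕ) where
  nV : ℕ
  vn : Fin nV → VNType n
  lam : Fin nV → Fin n → ℝ
  lam_nonneg : ∀ γ l, 0 ≤ lam γ l
  lam_sum : ∀ l, ∑ γ, lam γ l = 1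
  lam_pos_iff : ∀ γ l, 0 < lam γ l ↔ 0 < colCount (vn γ).τ l

/-- The check-node side of a MET D-GLDPC ensemble. -/
structure CNSide (n : ℕ) where
  nC : ℕ
  cn : Fin nC → CNType n
  rho : Fin nC → Fin n → ℝ
  rho_nonneg : ∀ δ l, 0 ≤ rho δ l
  rho_sum : ∀ l, ∑ δ, rho δ l = 1
  rho_pos_iff : ∀ δ l, 0 < rho δ l ↔ 0 < colCount (cn δ).τ l

/-- A MET D-GLDPC ensemble. -/
structure Ensemble (n : ℕ) extends VNSide n, CNSide n

/-- All VN local codes have full-rank generator matrix and minimum distance at least 2. -/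
def VNSide.Good {n : ℕ} (V : VNSide n) : Prop :=
  ∀ γ, ((V.vn γ).G).rank = (V.vn γ).k ∧ HasMinDistGE2 (V.vn γ).G

/-- All CN local codes have full-rank generator matrix and minimum distance at least 2. -/
def CNSide.Good {n : ℕ} (C : CNSide n) : Prop :=
  ∀ δ, ((C.cn δ).G).rank = (C.cn δ).h ∧ HasMinDistGE2 (C.cn δ).G

/-- The matrix `P(ε)` with entries `P^{l,m}(ε)`. -/
def Pmat {n : ℕ} (V : VNSide n) (ε : ℝ) : Matrix (Fin n) (Fin n) ℝ :=
  Matrix.of fun l m =>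
    ∑ γ, if HasMinDistEq2 (V.vn γ).G then
      (V.lam γ l / (colCount (V.vn γ).τ l : ℝ)) *
        ∑ u ∈ Finset.Icc 1 (V.vn γ).k, (chi2 (V.vn γ).G (V.vn γ).τ u l m : ℝ) * ε ^ u
    else 0

/-- The matrix `C` with entries `C^{l,m}`. -/
def Cmat {n : ℕ} (C : CNSide n) : Matrix (Fin n) (Fin n) ℝ :=
  Matrix.of fun l m =>
    ∑ δ, if HasMinDistEq2 (C.cn δ).G then
      (C.rho δ l / (colCount (C.cn δ).τ l : ℝ)) * (xi2 (C.cn δ).G (C.cn δ).τ l m : ℝ)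
    else 0

/-- Aggregate VN EXIT function `I_{EV,e}(I,ε)`. -/
def IEVagg {n : ℕ} (V : VNSide n) (e : Fin n) (I : Fin n → ℝ) (ε : ℝ) : ℝ :=
  ∑ γ ∈ Finset.univ.filter (fun γ => 0 < V.lam γ e),
    V.lam γ e * IEV (V.vn γ).G (V.vn γ).τ e I ε

/-- Aggregate CN EXIT function `I_{EC,e}(I)`. -/
def IECagg {n : ℕ} (C : CNSide n) (e : Fin n) (I : Fin n → ℝ) : ℝ :=
  ∑ δ ∈ Finset.univ.filter (fun δ => 0 < C.rho δ e),
    C.rho δ e * IEC (C.cn δ).G (C.cn δ).τ e I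

/-- The EXIT recursion `f(·,ε)`. -/
def exitMap {n : ℕ} (E : Ensemble n) (ε : ℝ) (I : Fin n → ℝ) : Fin n → ℝ :=
  fun e => IEVagg E.toVNSide e (fun m => IECagg E.toCNSide m I) ε

/-- Local stability of the fixed point `1` of the EXIT recursion. -/
def LocallyStable {n : ℕ} (E : Ensemble n) (ε : ℝ) : Prop :=
  ∃ U : Set (Fin n → ℝ), IsOpen U ∧ (fun _ => (1 : ℝ)) ∈ U ∧
    ∀ I ∈ U ∩ Set.Icc (fun _ => (0 : ℝ)) (fun _ => (1 : ℝ)),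
      Filter.Tendsto (fun m => (exitMap E ε)^[m] I) Filter.atTop (nhds fun _ => (1 : ℝ))

/-- Spectral radius of a real square matrix: the maximum modulus of its complex
eigenvalues. -/
def specRad {m : ℕ} (A : Matrix (Fin m) (Fin m) ℝ) : ℝ :=
  (spectralRadius ℂ (A.map fun x : ℝ => (x : ℂ))).toReal


/-! ### Auxiliary lemmas -/

lemma rank_eq_of_inj {k : ℕ} {J : Type} [Fintype J] (M : Matrix (Fin k) J (ZMod 2))
    (h : ∀ x, Matrix.vecMul x M = 0 → x = 0) : M.rank = k := by
  rw [← Matrix.rank_transpose, Matrix.rank]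
  have hinj : Function.Injective M.transpose.mulVecLin := by
    rw [← LinearMap.ker_eq_bot, LinearMap.ker_eq_bot']
    intro x hx
    apply h
    rw [← Matrix.mulVec_transpose]
    exact hx
  rw [LinearMap.finrank_range_of_inj hinj, Module.finrank_fin_fun]

lemma vecMul_eq_zero_of_rank {k q : ℕ} {G : Matrix (Fin k) (Fin q) (ZMod 2)}
    (h : G.rank = k) {x : Fin k → ZMod 2} (hx : Matrix.vecMul x G = 0) : x = 0 := by
  have h' : G.transpose.rank = k := by rw [Matrix.rank_transpose]; exact h
  rw [Matrix.rank] at h'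
  have hker : LinearMap.ker G.transpose.mulVecLin = ⊥ := by
    have hrn := LinearMap.finrank_range_add_finrank_ker G.transpose.mulVecLin
    rw [h', Module.finrank_fin_fun] at hrn
    have : Module.finrank (ZMod 2) (LinearMap.ker G.transpose.mulVecLin) = 0 := by omega
    exact Submodule.finrank_eq_zero.mp this
  have hz : G.transpose.mulVecLin x = 0 := by
    rw [Matrix.mulVecLin_apply, Matrix.mulVec_transpose]; exact hx
  exact (LinearMap.ker_eq_bot.mp hker) (by simpa using hz)

lemma colRank_eq {k q : ℕ} {G : Matrix (Fin k) (Fin q) (ZMod 2)}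
    (hrank : G.rank = k) (hmd : HasMinDistGE2 G)
    {A : Finset (Fin q)} (hA : Aᶜ.card ≤ 1) (T : Finset (Fin k)) :
    colRank G A T = k := by
  apply rank_eq_of_inj
  intro x hx
  by_contra hx0
  have hcw : Matrix.vecMul x G ≠ 0 := fun h0 => hx0 (vecMul_eq_zero_of_rank hrank h0)
  have hzero : ∀ a ∈ A, Matrix.vecMul x G a = 0 := by
    intro a ha
    have := congrFun hx (Sum.inl ⟨a, ha⟩)
    simpa [Matrix.vecMul, dotProduct] using this
  have hsub : (Finset.univ.filter fun i => Matrix.vecMul x G i ≠ 0) ⊆ Aᶜ := by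
    intro i hi
    simp only [Finset.mem_filter, Finset.mem_univ, true_and] at hi
    rw [Finset.mem_compl]
    intro hiA
    exact hi (hzero i hiA)
  have h2 := hmd x hcw
  have hle := Finset.card_le_card hsub
  unfold hWeight at h2
  omega

lemma filter_full_eq {q n : ℕ} (τ : Fin q → Fin n) :
    (Finset.univ.filter fun A : Finset (Fin q) =>
      ∀ l, (A.filter fun j => τ j = l).card = colCount τ l) = {Finset.univ} := by
  ext A
  simp only [Finset.mem_filter, Finset.mem_univ, true_and, Finset.mem_singleton]
  constructor
  · intro h
    rw [Finset.eq_univ_iff_forall]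
    intro j
    have hsub : (A.filter fun i => τ i = τ j) ⊆ (Finset.univ.filter fun i => τ i = τ j) :=
      Finset.filter_subset_filter _ (Finset.subset_univ A)
    have heq : (A.filter fun i => τ i = τ j) = (Finset.univ.filter fun i => τ i = τ j) :=
      Finset.eq_of_subset_of_card_le hsub (le_of_eq (h (τ j)).symm)
    have hm : j ∈ (A.filter fun i => τ i = τ j) := by
      rw [heq]; simp
    exact (Finset.mem_filter.mp hm).1
  · rintro rfl l; rfl

lemma filter_minus_eq {q n : ℕ} (τ : Fin q → Fin n) (e : Fin n) (he : 0 < colCount τ e) :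
    (Finset.univ.filter fun A : Finset (Fin q) =>
      ∀ l, (A.filter fun j => τ j = l).card = colCount τ l - (if l = e then 1 else 0))
    = (Finset.univ.filter fun j : Fin q => τ j = e).image (fun j => Finset.univ.erase j) := by
  ext A
  simp only [Finset.mem_filter, Finset.mem_univ, true_and, Finset.mem_image]
  constructor
  · intro h
    have hfull : ∀ l, l ≠ e → (A.filter fun j => τ j = l) = Finset.univ.filter fun j => τ j = l := by
      intro l hl
      refine Finset.eq_of_subset_of_card_le
        (Finset.filter_subset_filter _ (Finset.subset_univ A)) ?_
      have := h l
      rw [if_neg hl] at this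
      simp only [colCount] at this ⊢
      omega
    have hlt : (A.filter fun j => τ j = e).card < (Finset.univ.filter fun j => τ j = e).card := by
      have := h e
      rw [if_pos rfl] at this
      simp only [colCount] at this he ⊢
      omega
    have hss : (A.filter fun j => τ j = e) ⊂ (Finset.univ.filter fun j => τ j = e) := by
      refine (Finset.filter_subset_filter _ (Finset.subset_univ A)).ssubset_of_ne ?_
      intro heq; rw [heq] at hlt; omega
    obtain ⟨j, hj, hjA⟩ := Finset.exists_of_ssubset hss
    have hτj : τ j = e := (Finset.mem_filter.mp hj).2
    have hjA' : j ∉ A := fun hjmem => hjA (Finset.mem_filter.mpr ⟨hjmem, hτj⟩)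
    refine ⟨j, hτj, ?_⟩
    ext i
    simp only [Finset.mem_erase, Finset.mem_univ, and_true]
    constructor
    case mpr =>
      intro hiA
      intro hij
      exact hjA' (hij ▸ hiA)
    case mp =>
      intro hij
      by_cases hτi : τ i = e
      · by_contra hiA
        have hsub2 : (A.filter fun j' => τ j' = e)
            ⊆ (((Finset.univ.filter fun j' => τ j' = e).erase j).erase i) := by
          intro x hx
          rcases Finset.mem_filter.mp hx with ⟨hxA, hxe⟩
          refine Finset.mem_erase.mpr ⟨?_, Finset.mem_erase.mpr ⟨?_, by simp [hxe]⟩⟩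
          · rintro rfl; exact hiA hxA
          · rintro rfl; exact hjA' hxA
        have hile : i ∈ (Finset.univ.filter fun j' => τ j' = e).erase j :=
          Finset.mem_erase.mpr ⟨hij, by simp [hτi]⟩
        have hc2 := Finset.card_le_card hsub2
        rw [Finset.card_erase_of_mem hile, Finset.card_erase_of_mem hj] at hc2
        have hce := h e
        rw [if_pos rfl] at hce
        have hcard2 : 2 ≤ (Finset.univ.filter fun j' => τ j' = e).card := by
          have := Finset.one_lt_card.mpr ⟨j, hj, i, by simp [hτi], fun hh => hij hh.symm⟩
          omega
        simp only [colCount] at hce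
        omega
      · have hfl := hfull (τ i) hτi
        have hi : i ∈ (A.filter fun j' => τ j' = τ i) := by
          rw [hfl]; simp
        exact (Finset.mem_filter.mp hi).1
  · rintro ⟨j, hτj, rfl⟩ l
    rw [Finset.filter_erase]
    by_cases hl : l = e
    · subst hl
      rw [Finset.card_erase_of_mem (by simp [hτj])]
      simp [colCount]
    · rw [Finset.erase_eq_of_notMem]
      · simp [colCount, hl]
      · simp only [Finset.mem_filter, Finset.mem_univ, true_and]
        rw [hτj]; exact fun hh => hl hh.symm

lemma eTilde_full_eq {n k q : ℕ} {G : Matrix (Fin k) (Fin q) (ZMod 2)} (τ : Fin q → Fin n)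
    (hrank : G.rank = k) (hmd : HasMinDistGE2 G)
    {g : Fin n → ℕ} (hg : ∀ l, g l = colCount τ l) (u : ℕ) :
    eTilde G τ g u = (Finset.univ.filter fun T : Finset (Fin k) => T.card = u).card * k := by
  unfold eTilde
  have hpred : Finset.univ.filter (fun A : Finset (Fin q) =>
        ∀ l, (A.filter fun j => τ j = l).card = g l)
      = Finset.univ.filter (fun A => ∀ l, (A.filter fun j => τ j = l).card = colCount τ l) := by
    apply Finset.filter_congr; intro A _; simp only [hg]
  rw [hpred, filter_full_eq, Finset.sum_singleton]
  rw [Finset.sum_congr rfl (fun T _ =>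
    colRank_eq hrank hmd (A := Finset.univ) (by simp) T)]
  rw [Finset.sum_const, smul_eq_mul]

lemma eTilde_minus_eq {n k q : ℕ} {G : Matrix (Fin k) (Fin q) (ZMod 2)} (τ : Fin q → Fin n)
    (e : Fin n) (hrank : G.rank = k) (hmd : HasMinDistGE2 G) (he : 0 < colCount τ e)
    {g : Fin n → ℕ} (hg : ∀ l, g l = colCount τ l - (if l = e then 1 else 0)) (u : ℕ) :
    eTilde G τ g u
      = colCount τ e * ((Finset.univ.filter fun T : Finset (Fin k) => T.card = u).card * k) := by
  unfold eTilde
  have hpred : Finset.univ.filter (fun A : Finset (Fin q) =>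
        ∀ l, (A.filter fun j => τ j = l).card = g l)
      = Finset.univ.filter (fun A => ∀ l, (A.filter fun j => τ j = l).card
          = colCount τ l - (if l = e then 1 else 0)) := by
    apply Finset.filter_congr; intro A _; simp only [hg]
  rw [hpred, filter_minus_eq τ e he]
  rw [Finset.sum_image (fun x _ y _ hxy => by
    by_contra hne
    have : x ∈ Finset.univ.erase y := Finset.mem_erase.mpr ⟨hne, Finset.mem_univ x⟩
    rw [← hxy] at this
    exact Finset.notMem_erase x Finset.univ this)]
  have hinner : ∀ j ∈ (Finset.univ.filter fun j : Fin q => τ j = e),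
      (∑ T ∈ Finset.univ.filter (fun T : Finset (Fin k) => T.card = u),
        colRank G (Finset.univ.erase j) T)
      = (Finset.univ.filter fun T : Finset (Fin k) => T.card = u).card * k := by
    intro j _
    rw [Finset.sum_congr rfl (fun T _ => colRank_eq hrank hmd (A := Finset.univ.erase j)
      (by rw [Finset.compl_erase]; simp) T)]
    rw [Finset.sum_const, smul_eq_mul]
  rw [Finset.sum_congr rfl hinner, Finset.sum_const, smul_eq_mul]
  rfl

lemma eTildeC_eq {n h s : ℕ} (G : Matrix (Fin h) (Fin s) (ZMod 2)) (τ : Fin s → Fin n)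
    (g : Fin n → ℕ) : eTildeC G τ g = eTilde G τ g 0 := by
  unfold eTildeC eTilde
  refine Finset.sum_congr rfl fun A _ => ?_
  have hT : (Finset.univ.filter fun T : Finset (Fin h) => T.card = 0) = {∅} := by
    ext T; simp [Finset.card_eq_zero]
  rw [hT, Finset.sum_singleton]

lemma aVN_zero {n k q : ℕ} {G : Matrix (Fin k) (Fin q) (ZMod 2)} (τ : Fin q → Fin n)
    (e : Fin n) (hrank : G.rank = k) (hmd : HasMinDistGE2 G) (he : 0 < colCount τ e)
    (z : ℕ) : aVN G τ e (fun _ => 0) z = 0 := by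
  unfold aVN
  rw [eTilde_full_eq τ hrank hmd (g := fun l => colCount τ l - (fun _ => 0) l)
      (fun l => by simp) (k - z),
    eTilde_minus_eq τ e hrank hmd he
      (g := fun l => colCount τ l - (fun _ => 0) l - (if l = e then 1 else 0))
      (fun l => by simp) (k - z)]
  simp only [Nat.sub_zero]
  push_cast
  ring

lemma aCN_zero {n h s : ℕ} {G : Matrix (Fin h) (Fin s) (ZMod 2)} (τ : Fin s → Fin n)
    (e : Fin n) (hrank : G.rank = h) (hmd : HasMinDistGE2 G) (he : 0 < colCount τ e) :
    aCN G τ e (fun _ => 0) = 0 := by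
  unfold aCN
  rw [eTildeC_eq, eTildeC_eq]
  rw [eTilde_full_eq τ hrank hmd (g := fun l => colCount τ l - (fun _ => 0) l)
      (fun l => by simp) 0,
    eTilde_minus_eq τ e hrank hmd he
      (g := fun l => colCount τ l - (fun _ => 0) l - (if l = e then 1 else 0))
      (fun l => by simp) 0]
  simp only [Nat.sub_zero]
  push_cast
  ring

lemma IEV_one {n k q : ℕ} {G : Matrix (Fin k) (Fin q) (ZMod 2)} (τ : Fin q → Fin n)
    (e : Fin n) (hrank : G.rank = k) (hmd : HasMinDistGE2 G) (he : 0 < colCount τ e)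
    (ε : ℝ) : IEV G τ e (fun _ => 1) ε = 1 := by
  unfold IEV
  rw [sub_eq_self]
  apply mul_eq_zero_of_right
  apply Finset.sum_eq_zero
  intro z _
  apply mul_eq_zero_of_right
  apply Finset.sum_eq_zero
  intro t _
  by_cases ht : t = fun _ => 0
  · subst ht
    rw [aVN_zero τ e hrank hmd he z, mul_zero]
  · have hex : ∃ l, t l ≠ 0 := by
      by_contra hc; push_neg at hc; exact ht (funext hc)
    obtain ⟨l0, hl0⟩ := hex
    apply mul_eq_zero_of_left
    exact Finset.prod_eq_zero (Finset.mem_univ l0) (by simp [zero_pow hl0])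

lemma IEC_one {n h s : ℕ} {G : Matrix (Fin h) (Fin s) (ZMod 2)} (τ : Fin s → Fin n)
    (e : Fin n) (hrank : G.rank = h) (hmd : HasMinDistGE2 G) (he : 0 < colCount τ e) :
    IEC G τ e (fun _ => 1) = 1 := by
  unfold IEC
  rw [sub_eq_self]
  apply mul_eq_zero_of_right
  apply Finset.sum_eq_zero
  intro t _
  by_cases ht : t = fun _ => 0
  · subst ht
    rw [aCN_zero τ e hrank hmd he, mul_zero]
  · have hex : ∃ l, t l ≠ 0 := by
      by_contra hc; push_neg at hc; exact ht (funext hc)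
    obtain ⟨l0, hl0⟩ := hex
    apply mul_eq_zero_of_left
    exact Finset.prod_eq_zero (Finset.mem_univ l0) (by simp [zero_pow hl0])

lemma IECagg_one {n : ℕ} (C : CNSide n) (hC : C.Good) (e : Fin n) :
    IECagg C e (fun _ => 1) = 1 := by
  unfold IECagg
  have h1 : ∀ δ ∈ Finset.univ.filter (fun δ => 0 < C.rho δ e),
      C.rho δ e * IEC (C.cn δ).G (C.cn δ).τ e (fun _ => 1) = C.rho δ e := by
    intro δ hδ
    have hpos := (Finset.mem_filter.mp hδ).2
    have hcc := (C.rho_pos_iff δ e).mp hpos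
    rw [IEC_one _ e (hC δ).1 (hC δ).2 hcc, mul_one]
  rw [Finset.sum_congr rfl h1]
  rw [Finset.sum_filter_of_ne (fun δ _ hne => lt_of_le_of_ne (C.rho_nonneg δ e) (Ne.symm hne))]
  exact C.rho_sum e

lemma IEVagg_one {n : ℕ} (V : VNSide n) (hV : V.Good) (e : Fin n) (I : Fin n → ℝ)
    (hI : I = fun _ => 1) (ε : ℝ) : IEVagg V e I ε = 1 := by
  subst hI
  unfold IEVagg
  have h1 : ∀ γ ∈ Finset.univ.filter (fun γ => 0 < V.lam γ e),
      V.lam γ e * IEV (V.vn γ).G (V.vn γ).τ e (fun _ => 1) ε = V.lam γ e := by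
    intro γ hγ
    have hpos := (Finset.mem_filter.mp hγ).2
    have hcc := (V.lam_pos_iff γ e).mp hpos
    rw [IEV_one _ e (hV γ).1 (hV γ).2 hcc, mul_one]
  rw [Finset.sum_congr rfl h1]
  rw [Finset.sum_filter_of_ne (fun γ _ hne => lt_of_le_of_ne (V.lam_nonneg γ e) (Ne.symm hne))]
  exact V.lam_sum e

/-- **Lemma 1.** For a MET ensemble with all VN and CN local codes of minimum distance at
least `2` and no punctured bits, the all-ones vector is a fixed point of the EXIT
recursion for every erasure probability `ε ∈ (0,1)`. -/
theorem allOnes_fixed_point {n : ℕ} (hn : 1 ≤ n) (E : Ensemble n)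
    (hV : E.toVNSide.Good) (hC : E.toCNSide.Good)
    (ε : ℝ) (hε : ε ∈ Set.Ioo (0 : ℝ) 1) :
    exitMap E ε (fun _ => 1) = fun _ => 1 := by
  funext e
  unfold exitMap
  exact IEVagg_one E.toVNSide hV e _ (funext fun m => IECagg_one E.toCNSide hC m) ε
end MET
end
end

section
/- VN-side derivative identity: For a multi-edge type D-GLDPC ensemble in which every variable-node local code has minimum distance at least 2 and no encoded bit is punctured, for every ε ∈ (0,1) and all l,m ∈ E, the partial derivative of the aggregate variable-node EXIT function I_{EV,l}(·,ε) with respect to its m-th argument, evaluated at the all-ones point I = (1,…,1), equals P^{l,m}(ε) = Σ_{γ∈F_{V2}} (λ_{γ,l}/q_{γ,l}) Σ_{u=1}^{k_γ} χ_{2,u}^{(γ)}(l,m) ε^u. -/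
open scoped Classical

noncomputable section

namespace MET

/-!
Along the line `I = update 1 m x`, every tuple `t` with a nonzero entry off `m` contributes zero to
`IEV`, which becomes a polynomial `∑ₛ (1 - x) ^ s x ^ (b - 1 - s) a_{s δₘ, z}`; its derivative at
`x = 1` is `(b - 1) a_{0,z} - a_{δₘ,z}`. Only split information functions with at most two removed
columns occur. Because `G` has full rank and its local code has minimum distance at least 2,
removing one column loses no rank, while removing a pair `{i, j}` (and adding the identity columns
`T`) loses one unit of rank exactly when the unique message encoding the weight-2 word on `{i, j}`
vanishes on `T`. Hence `a_{0,z} = 0` and, counting the sets `T`, `a_{δₘ,z}` is the sum over the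
typed pairs `(i, j)` of `C(k - w_{ij}, k - z)`, where `w_{ij}` is the weight of that message. The
Bernstein-type sum over `z` turns `C(k - w, k - z)` into `ε ^ w`, and grouping the pairs by `w`
gives `∑ᵤ χ_{2,u}(l, m) ε ^ u`.
-/

open Matrix

lemma _root_.Matrix.vecMul_injective_of_rank_eq {K m n : Type*} [Field K] [Fintype m]
    [Fintype n] {M : Matrix m n K} (h : M.rank = Fintype.card m) :
    Function.Injective M.vecMul :=
  vecMul_injective_iff.mpr <| linearIndependent_iff_card_eq_finrank_span.mpr <| by
    rw [← h, M.rank_eq_finrank_span_row, Set.finrank]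

lemma _root_.Matrix.rank_add_finrank_ker_vecMulLinear {K m n : Type*} [Field K] [Fintype m]
    [Fintype n] (M : Matrix m n K) :
    M.rank + Module.finrank K (LinearMap.ker M.vecMulLinear) = Fintype.card m := by
  rw [M.rank_eq_finrank_span_row, ← range_vecMulLinear,
    LinearMap.finrank_range_add_finrank_ker, Module.finrank_fintype_fun_eq_card]

lemma _root_.Finset.card_filter_eq_ite_exists_of_card_le_one {α : Type*} {s : Finset α}
    (hs : s.card ≤ 1) (P : α → Prop) [DecidablePred P] :
    (s.filter P).card = if ∃ x ∈ s, P x then 1 else 0 := by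
  split_ifs with h
  · exact le_antisymm ((Finset.card_filter_le s P).trans hs)
      (Finset.card_pos.mpr (Finset.filter_nonempty_iff.mpr h))
  · exact Finset.card_eq_zero.mpr (Finset.filter_eq_empty_iff.mpr fun x hx hPx => h ⟨x, hx, hPx⟩)

section HammingWeight

variable {m : ℕ}

lemma hWeight_pos {c : Fin m → ZMod 2} (hc : c ≠ 0) : 0 < hWeight c :=
  Finset.card_pos.mpr <| by
    obtain ⟨r, hr⟩ := Function.ne_iff.mp hc
    exact ⟨r, Finset.mem_filter.mpr ⟨Finset.mem_univ r, hr⟩⟩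

lemma hWeight_le (c : Fin m → ZMod 2) : hWeight c ≤ m :=
  (Finset.card_le_univ _).trans_eq (Fintype.card_fin m)

lemma hWeight_le_card_compl {c : Fin m → ZMod 2} {A : Finset (Fin m)}
    (hc : ∀ r ∈ A, c r = 0) : hWeight c ≤ Aᶜ.card :=
  Finset.card_le_card fun r hr => Finset.mem_compl.mpr fun hrA =>
    (Finset.mem_filter.mp hr).2 (hc r hrA)

lemma hWeight_wt2vec {i j : Fin m} (hij : i ≠ j) : hWeight (wt2vec i j) = 2 := by
  rw [hWeight, show Finset.univ.filter (fun r => wt2vec i j r ≠ 0) = {i, j} by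
    ext; simp [wt2vec, or_iff_not_imp_left]]
  exact Finset.card_pair hij

lemma wt2vec_ne_zero (i j : Fin m) : wt2vec i j ≠ 0 :=
  Function.ne_iff.mpr ⟨i, by simp [wt2vec]⟩

lemma eq_wt2vec_of_two_le_hWeight {c : Fin m → ZMod 2} {i j : Fin m}
    (hc : ∀ r, r ≠ i → r ≠ j → c r = 0) (h2 : 2 ≤ hWeight c) : c = wt2vec i j := by
  have hsupp : (Finset.univ.filter fun r => c r ≠ 0) ⊆ {i, j} := fun r hr => by
    by_contra hij
    simp only [Finset.mem_insert, Finset.mem_singleton, not_or] at hij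
    exact (Finset.mem_filter.mp hr).2 (hc r hij.1 hij.2)
  have hsupp_eq := Finset.eq_of_subset_of_card_le hsupp (Finset.card_le_two.trans h2)
  funext r
  by_cases hr : r = i ∨ r = j
  · have hr' : r ∈ Finset.univ.filter fun r => c r ≠ 0 := by
      rw [hsupp_eq]; simpa using hr
    rw [show c r = 1 from Fin.eq_one_of_ne_zero _ (Finset.mem_filter.mp hr').2]
    simp [wt2vec, hr]
  · simp only [not_or] at hr
    simp [wt2vec, hc r hr.1 hr.2, hr.1, hr.2]

end HammingWeight

section ColRank

variable {k q : ℕ}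

def wt2Preimage (G : Matrix (Fin k) (Fin q) (ZMod 2)) (i j : Fin q) : Finset (Fin k → ZMod 2) :=
  Finset.univ.filter fun x => x ᵥ* G = wt2vec i j

def colMatrix (G : Matrix (Fin k) (Fin q) (ZMod 2)) (A : Finset (Fin q)) (T : Finset (Fin k)) :
    Matrix (Fin k) ({x // x ∈ A} ⊕ {x // x ∈ T}) (ZMod 2) :=
  Matrix.of fun i j => Sum.elim (fun a => G i a.1) (fun t => if i = t.1 then 1 else 0) j

variable {G : Matrix (Fin k) (Fin q) (ZMod 2)} {A : Finset (Fin q)} {T : Finset (Fin k)}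

@[simp]
lemma mem_wt2Preimage {i j : Fin q} {x : Fin k → ZMod 2} :
    x ∈ wt2Preimage G i j ↔ x ᵥ* G = wt2vec i j := by
  simp [wt2Preimage]

lemma ne_zero_of_mem_wt2Preimage {i j : Fin q} {x : Fin k → ZMod 2}
    (hx : x ∈ wt2Preimage G i j) : x ≠ 0 := fun hx0 =>
  wt2vec_ne_zero i j (by rw [← mem_wt2Preimage.mp hx, hx0, zero_vecMul])

lemma card_wt2Preimage_le_one (hrank : G.rank = k) (i j : Fin q) :
    (wt2Preimage G i j).card ≤ 1 :=
  Finset.card_le_one.mpr fun _ hx _ hy => vecMul_injective_of_rank_eq (by simpa using hrank)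
    ((mem_wt2Preimage.mp hx).trans (mem_wt2Preimage.mp hy).symm)

lemma colRank_eq_rank_colMatrix : colRank G A T = (colMatrix G A T).rank :=
  rfl

lemma mem_ker_colMatrix {x : Fin k → ZMod 2} :
    x ∈ LinearMap.ker (colMatrix G A T).vecMulLinear ↔
      (∀ a ∈ A, (x ᵥ* G) a = 0) ∧ ∀ t ∈ T, x t = 0 := by
  simp only [LinearMap.mem_ker, vecMulLinear_apply, funext_iff, Sum.forall, Pi.zero_apply,
    Subtype.forall]
  simp [colMatrix, vecMul, dotProduct]

lemma colRank_add_finrank_ker :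
    colRank G A T + Module.finrank (ZMod 2) (LinearMap.ker (colMatrix G A T).vecMulLinear)
      = k := by
  rw [colRank_eq_rank_colMatrix, rank_add_finrank_ker_vecMulLinear, Fintype.card_fin]

variable (hrank : G.rank = k) (hmin : HasMinDistGE2 G)
include hrank hmin

lemma colRank_eq_of_card_compl_le_one (hA : Aᶜ.card ≤ 1) : colRank G A T = k := by
  have hker : LinearMap.ker (colMatrix G A T).vecMulLinear = ⊥ := by
    refine (Submodule.eq_bot_iff _).mpr fun x hx => ?_
    have hcode : x ᵥ* G = 0 := by
      by_contra hne
      have := (hmin x hne).trans ((hWeight_le_card_compl (mem_ker_colMatrix.mp hx).1).trans hA)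
      omega
    exact vecMul_injective_of_rank_eq (by simpa using hrank) (by simpa using hcode)
  have := colRank_add_finrank_ker (G := G) (A := A) (T := T)
  rwa [hker, finrank_bot, add_zero] at this

lemma ker_colMatrix_eq_span_of_compl_eq_pair {i j : Fin q} (hA : Aᶜ = {i, j}) :
    LinearMap.ker (colMatrix G A T).vecMulLinear
      = Submodule.span (ZMod 2) ((wt2Preimage G i j).filter fun x => ∀ t ∈ T, x t = 0) := by
  have hnotA : ∀ r, r ∉ A ↔ r = i ∨ r = j := fun r => by
    rw [← Finset.mem_compl, hA]; simp
  apply le_antisymm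
  · intro x hx
    obtain ⟨hxA, hxT⟩ := mem_ker_colMatrix.mp hx
    by_cases hx0 : x ᵥ* G = 0
    · rw [show x = 0 from vecMul_injective_of_rank_eq (by simpa using hrank) (by simpa using hx0)]
      exact Submodule.zero_mem _
    · refine Submodule.subset_span (Finset.mem_filter.mpr ⟨mem_wt2Preimage.mpr
        (eq_wt2vec_of_two_le_hWeight (fun r hri hrj => hxA r ?_) (hmin x hx0)), hxT⟩)
      by_contra hr
      exact ((hnotA r).mp hr).elim hri hrj
  · refine Submodule.span_le.mpr fun x hx => mem_ker_colMatrix.mpr ⟨fun a ha => ?_,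
      (Finset.mem_filter.mp hx).2⟩
    have : ¬(a = i ∨ a = j) := fun h => (hnotA a).mpr h ha
    simp [mem_wt2Preimage.mp (Finset.mem_filter.mp hx).1, wt2vec, this]

lemma colRank_add_card_eq_of_compl_eq_pair {i j : Fin q} (hA : Aᶜ = {i, j}) :
    colRank G A T + ((wt2Preimage G i j).filter fun x => ∀ t ∈ T, x t = 0).card = k := by
  set S := (wt2Preimage G i j).filter fun x => ∀ t ∈ T, x t = 0
  have hS : (S : Set (Fin k → ZMod 2)).Subsingleton := Finset.card_le_one_iff_subsingleton.mp
    ((Finset.card_filter_le _ _).trans (card_wt2Preimage_le_one hrank i j))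
  have hindep : LinearIndepOn (ZMod 2) id (S : Set (Fin k → ZMod 2)) := by
    rcases hS.eq_empty_or_singleton with h | ⟨x, h⟩
    · rw [h]; exact linearIndepOn_empty _ _
    · have hx : x ∈ S := by simp [← Finset.mem_coe, h]
      rw [h]
      exact LinearIndepOn.singleton (ne_zero_of_mem_wt2Preimage (Finset.mem_filter.mp hx).1)
  rw [← finrank_span_finset_eq_card hindep,
    ← ker_colMatrix_eq_span_of_compl_eq_pair hrank hmin hA]
  exact colRank_add_finrank_ker

end ColRank

section ColRankSum

variable {k q : ℕ} {G : Matrix (Fin k) (Fin q) (ZMod 2)}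

def colRankSum (G : Matrix (Fin k) (Fin q) (ZMod 2)) (u : ℕ) (A : Finset (Fin q)) : ℕ :=
  ∑ T ∈ Finset.univ.filter (fun T : Finset (Fin k) => T.card = u), colRank G A T

lemma card_filter_card_eq (u : ℕ) :
    (Finset.univ.filter fun T : Finset (Fin k) => T.card = u).card = k.choose u := by
  rw [show Finset.univ.filter (fun T : Finset (Fin k) => T.card = u)
      = Finset.powersetCard u .univ by ext; simp,
    Finset.card_powersetCard, Finset.card_fin]

lemma card_filter_forall_eq_zero (x : Fin k → ZMod 2) (u : ℕ) :
    ((Finset.univ.filter fun T : Finset (Fin k) => T.card = u).filter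
      fun T => ∀ t ∈ T, x t = 0).card = (k - hWeight x).choose u := by
  have hzero : (Finset.univ.filter fun t => x t = 0).card = k - hWeight x := by
    have := Finset.card_filter_add_card_filter_not (s := .univ) fun t => x t = 0
    rw [Finset.card_univ, Fintype.card_fin] at this
    simp only [hWeight, ne_eq]
    omega
  rw [← hzero, ← Finset.card_powersetCard]
  congr 1
  ext T
  simp [Finset.mem_powersetCard, Finset.subset_iff, and_comm]

variable (hrank : G.rank = k) (hmin : HasMinDistGE2 G)
include hrank hmin

lemma colRankSum_of_card_compl_le_one {A : Finset (Fin q)} (hA : Aᶜ.card ≤ 1) (u : ℕ) :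
    colRankSum G u A = k.choose u * k := by
  rw [colRankSum, Finset.sum_congr rfl fun T _ => colRank_eq_of_card_compl_le_one hrank hmin hA,
    Finset.sum_const, smul_eq_mul, card_filter_card_eq]

lemma colRankSum_add_sum_eq_of_compl_eq_pair {A : Finset (Fin q)} {i j : Fin q}
    (hA : Aᶜ = {i, j}) (u : ℕ) :
    colRankSum G u A + ∑ x ∈ wt2Preimage G i j, (k - hWeight x).choose u = k.choose u * k := by
  have hswap : ∑ x ∈ wt2Preimage G i j, (k - hWeight x).choose u
      = ∑ T ∈ Finset.univ.filter (fun T : Finset (Fin k) => T.card = u),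
          ((wt2Preimage G i j).filter fun x => ∀ t ∈ T, x t = 0).card := by
    simp only [← card_filter_forall_eq_zero, Finset.card_filter]
    exact Finset.sum_comm
  rw [hswap, colRankSum, ← Finset.sum_add_distrib,
    Finset.sum_congr rfl fun T _ => colRank_add_card_eq_of_compl_eq_pair hrank hmin hA,
    Finset.sum_const, smul_eq_mul, card_filter_card_eq]

end ColRankSum

section TypeCounts

variable {n q : ℕ} (τ : Fin q → Fin n)

def withTypeCounts (g : Fin n → ℕ) : Finset (Finset (Fin q)) :=
  Finset.univ.filter fun A => ∀ l, (A.filter fun j => τ j = l).card = g l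

lemma eTilde_eq_sum_colRankSum {k : ℕ} (G : Matrix (Fin k) (Fin q) (ZMod 2)) (g : Fin n → ℕ)
    (u : ℕ) : eTilde G τ g u = ∑ A ∈ withTypeCounts τ g, colRankSum G u A :=
  rfl

variable {τ}

lemma card_filter_compl_add_card_filter (A : Finset (Fin q)) (l : Fin n) :
    (Aᶜ.filter fun j => τ j = l).card + (A.filter fun j => τ j = l).card = colCount τ l := by
  rw [← Finset.card_union_of_disjoint (Finset.disjoint_filter_filter disjoint_compl_left),
    ← Finset.filter_union, Finset.union_comm, Finset.union_compl, colCount]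

lemma withTypeCounts_colCount : withTypeCounts τ (colCount τ) = {Finset.univ} := by
  ext A
  simp only [withTypeCounts, Finset.mem_filter, Finset.mem_univ, true_and,
    Finset.mem_singleton]
  refine ⟨fun hA => Finset.eq_univ_iff_forall.mpr fun j => ?_, fun hA l => hA ▸ rfl⟩
  have hcompl := card_filter_compl_add_card_filter (τ := τ) A (τ j)
  rw [hA, add_eq_right, Finset.card_eq_zero, Finset.filter_eq_empty_iff] at hcompl
  by_contra hj
  exact hcompl (Finset.mem_compl.mpr hj) rfl

lemma erase_mem_withTypeCounts {g : Fin n → ℕ} {A : Finset (Fin q)} {j : Fin q}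
    (hA : A ∈ withTypeCounts τ g) (hj : j ∈ A) :
    A.erase j ∈ withTypeCounts τ (fun l => g l - if l = τ j then 1 else 0) := by
  refine Finset.mem_filter.mpr ⟨Finset.mem_univ _, fun l => ?_⟩
  rw [Finset.filter_erase, Finset.card_erase_eq_ite, (Finset.mem_filter.mp hA).2 l]
  simp only [Finset.mem_filter, hj, true_and, eq_comm]
  split_ifs <;> rfl

lemma insert_mem_withTypeCounts {g : Fin n → ℕ} {A : Finset (Fin q)} {j : Fin q}
    (hA : A ∈ withTypeCounts τ (fun l => g l - if l = τ j then 1 else 0)) (hj : j ∉ A)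
    (hg : 1 ≤ g (τ j)) : insert j A ∈ withTypeCounts τ g := by
  refine Finset.mem_filter.mpr ⟨Finset.mem_univ _, fun l => ?_⟩
  have hAl : (A.filter fun r => τ r = l).card = g l - if l = τ j then 1 else 0 :=
    (Finset.mem_filter.mp hA).2 l
  rw [Finset.filter_insert]
  by_cases hl : l = τ j
  · subst hl
    rw [if_pos rfl] at hAl
    rw [if_pos rfl, Finset.card_insert_of_notMem (by simp [hj]), hAl]
    omega
  · rw [if_neg hl, Nat.sub_zero] at hAl
    rwa [if_neg (Ne.symm hl)]

/-- Double counting of the pairs `(A, j)` with `j ∈ A` of type `e` against `(A.erase j, j)`: a set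
in `withTypeCounts τ (g - δₑ)` has `colCount τ e + 1 - g e` columns of type `e` to add back. -/
lemma sum_withTypeCounts_sum_erase {M : Type*} [AddCommMonoid M] (F : Finset (Fin q) → M)
    {g : Fin n → ℕ} {e : Fin n} (hg : 1 ≤ g e) :
    ∑ A ∈ withTypeCounts τ g, ∑ j ∈ A.filter (fun j => τ j = e), F (A.erase j)
      = (colCount τ e + 1 - g e) •
          ∑ A ∈ withTypeCounts τ (fun l => g l - if l = e then 1 else 0), F A := by
  have hcompl : ∀ A ∈ withTypeCounts τ (fun l => g l - if l = e then 1 else 0),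
      (Aᶜ.filter fun j => τ j = e).card = colCount τ e + 1 - g e := fun A hA => by
    have h1 := card_filter_compl_add_card_filter (τ := τ) A e
    have h2 := (Finset.mem_filter.mp hA).2 e
    simp only [↓reduceIte] at h2
    omega
  have hrhs : (colCount τ e + 1 - g e) •
        ∑ A ∈ withTypeCounts τ (fun l => g l - if l = e then 1 else 0), F A
      = ∑ A ∈ withTypeCounts τ (fun l => g l - if l = e then 1 else 0),
          ∑ _j ∈ Aᶜ.filter (fun j => τ j = e), F A := by
    rw [Finset.smul_sum]
    exact Finset.sum_congr rfl fun A hA => by rw [Finset.sum_const, hcompl A hA]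
  rw [hrhs, Finset.sum_sigma', Finset.sum_sigma']
  refine Finset.sum_nbij' (fun p => ⟨p.1.erase p.2, p.2⟩) (fun p => ⟨insert p.2 p.1, p.2⟩)
    ?_ ?_ ?_ ?_ fun _ _ => rfl
  · rintro ⟨A, j⟩ hp
    obtain ⟨hA, hjA, rfl⟩ : A ∈ withTypeCounts τ g ∧ j ∈ A ∧ τ j = e := by simpa using hp
    simpa using erase_mem_withTypeCounts hA hjA
  · rintro ⟨A, j⟩ hp
    obtain ⟨hA, hjA, rfl⟩ : A ∈ withTypeCounts τ (fun l => g l - if l = e then 1 else 0) ∧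
        j ∉ A ∧ τ j = e := by simpa using hp
    simpa using insert_mem_withTypeCounts hA hjA hg
  · rintro ⟨A, j⟩ hp
    simp [Finset.insert_erase (Finset.mem_filter.mp (Finset.mem_sigma.mp hp).2).1]
  · rintro ⟨A, j⟩ hp
    simp [Finset.erase_insert (Finset.mem_compl.mp
      (Finset.mem_filter.mp (Finset.mem_sigma.mp hp).2).1)]

lemma sum_withTypeCounts_colCount_sub_single {M : Type*} [AddCommMonoid M]
    (F : Finset (Fin q) → M) {m : Fin n} (hm : 1 ≤ colCount τ m) :
    ∑ A ∈ withTypeCounts τ (fun l => colCount τ l - if l = m then 1 else 0), F A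
      = ∑ j ∈ Finset.univ.filter (fun j => τ j = m), F (Finset.univ.erase j) := by
  have := sum_withTypeCounts_sum_erase (τ := τ) F hm
  rwa [withTypeCounts_colCount, Finset.sum_singleton, Nat.add_sub_cancel_left, one_smul,
    eq_comm] at this

end TypeCounts

section ETilde

variable {n k q : ℕ} {G : Matrix (Fin k) (Fin q) (ZMod 2)} {τ : Fin q → Fin n}

def typedPairs (τ : Fin q → Fin n) (e m : Fin n) : Finset (Fin q × Fin q) :=
  Finset.univ.filter fun p => p.1 ≠ p.2 ∧ τ p.1 = e ∧ τ p.2 = m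

lemma sum_typedPairs {M : Type*} [AddCommMonoid M] (f : Fin q → Fin q → M) (e m : Fin n) :
    ∑ p ∈ typedPairs τ e m, f p.1 p.2
      = ∑ j ∈ Finset.univ.filter (fun j => τ j = m),
          ∑ i ∈ (Finset.univ.erase j).filter (fun i => τ i = e), f i j :=
  Finset.sum_finset_product_right' _ _ _ fun p => by
    simp only [typedPairs, Finset.mem_filter, Finset.mem_univ, Finset.mem_erase]
    tauto

lemma lt_colCount_of_mem_typedPairs {e m : Fin n} {p : Fin q × Fin q}
    (hp : p ∈ typedPairs τ e m) : (if m = e then 1 else 0) < colCount τ m := by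
  obtain ⟨hne, he, hm⟩ := (Finset.mem_filter.mp hp).2
  have hmem : ∀ {i}, τ i = m → i ∈ Finset.univ.filter fun j => τ j = m := fun h =>
    Finset.mem_filter.mpr ⟨Finset.mem_univ _, h⟩
  split_ifs with hme
  · exact Finset.one_lt_card.mpr ⟨p.1, hmem (he.trans hme.symm), p.2, hmem hm, hne⟩
  · exact Finset.card_pos.mpr ⟨p.2, hmem hm⟩

lemma card_filter_univ_erase {j : Fin q} (e : Fin n) :
    ((Finset.univ.erase j).filter fun i => τ i = e).card
      = colCount τ e - if τ j = e then 1 else 0 := by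
  rw [Finset.filter_erase, Finset.card_erase_eq_ite, colCount]
  simp only [Finset.mem_filter, Finset.mem_univ, true_and]
  split_ifs <;> rfl

/-- Removing a column of type `m` and then one of type `e` reaches each column set once, or
twice when `m = e`. -/
lemma mul_eTilde_colCount_sub_pair {e m : Fin n} (hm : 1 ≤ colCount τ m)
    (he : (if e = m then 1 else 0) < colCount τ e) (u : ℕ) :
    ((if e = m then 1 else 0) + 1)
        * eTilde G τ (fun l => colCount τ l - (if l = m then 1 else 0) - if l = e then 1 else 0) u
      = ∑ j ∈ Finset.univ.filter (fun j => τ j = m),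
          ∑ i ∈ (Finset.univ.erase j).filter (fun i => τ i = e),
            colRankSum G u ((Finset.univ.erase j).erase i) := by
  have h := sum_withTypeCounts_sum_erase (τ := τ) (colRankSum G u) (e := e)
    (g := fun l => colCount τ l - if l = m then 1 else 0) (by split_ifs at he ⊢ <;> omega)
  rw [sum_withTypeCounts_colCount_sub_single _ hm, smul_eq_mul] at h
  rw [eTilde_eq_sum_colRankSum, h]
  congr 1
  split_ifs at he ⊢ <;> omega

variable (hrank : G.rank = k) (hmin : HasMinDistGE2 G)
include hrank hmin

lemma eTilde_colCount (u : ℕ) : eTilde G τ (colCount τ) u = k.choose u * k := by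
  rw [eTilde_eq_sum_colRankSum, withTypeCounts_colCount, Finset.sum_singleton]
  exact colRankSum_of_card_compl_le_one hrank hmin (by simp) u

lemma eTilde_colCount_sub_single {m : Fin n} (hm : 1 ≤ colCount τ m) (u : ℕ) :
    eTilde G τ (fun l => colCount τ l - if l = m then 1 else 0) u
      = colCount τ m * (k.choose u * k) := by
  rw [eTilde_eq_sum_colRankSum, sum_withTypeCounts_colCount_sub_single _ hm,
    Finset.sum_congr rfl fun j _ => colRankSum_of_card_compl_le_one hrank hmin (by simp) u,
    Finset.sum_const, smul_eq_mul, colCount]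

lemma aVN_zero_s4 {e : Fin n} (he : 1 ≤ colCount τ e) (z : ℕ) : aVN G τ e 0 z = 0 := by
  simp only [aVN, Pi.zero_apply, Nat.sub_zero, zero_add]
  rw [eTilde_colCount hrank hmin, eTilde_colCount_sub_single hrank hmin he]
  push_cast
  ring

lemma aVN_single_one {e m : Fin n} (he : 1 ≤ colCount τ e)
    (hm : (if m = e then 1 else 0) < colCount τ m) (z : ℕ) :
    aVN G τ e (Pi.single m 1) z
      = ∑ p ∈ typedPairs τ e m, ∑ x ∈ wt2Preimage G p.1 p.2,
          ((k - hWeight x).choose (k - z) : ℝ) := by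
  have hm' : 1 ≤ colCount τ m := by split_ifs at hm <;> omega
  have he' : (if e = m then 1 else 0) < colCount τ e := by
    by_cases h : e = m
    · subst h; simpa using hm
    · simp only [h, if_false]
      omega
  have key : (colCount τ e - if e = m then 1 else 0)
        * eTilde G τ (fun l => colCount τ l - if l = m then 1 else 0) (k - z)
      = ((if e = m then 1 else 0) + 1) * eTilde G τ
          (fun l => colCount τ l - (if l = m then 1 else 0) - if l = e then 1 else 0) (k - z)
        + ∑ p ∈ typedPairs τ e m, ∑ x ∈ wt2Preimage G p.1 p.2,
            (k - hWeight x).choose (k - z) := by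
    rw [mul_eTilde_colCount_sub_pair hm' he',
      sum_typedPairs (fun i j => ∑ x ∈ wt2Preimage G i j, (k - hWeight x).choose (k - z)),
      ← Finset.sum_add_distrib, eTilde_colCount_sub_single hrank hmin hm', mul_left_comm]
    refine (Finset.sum_const_nat fun j hj => ?_).symm
    rw [← Finset.sum_add_distrib, Finset.sum_congr rfl fun i _ =>
        colRankSum_add_sum_eq_of_compl_eq_pair hrank hmin (i := i) (j := j) (by ext; simp) _,
      Finset.sum_const, card_filter_univ_erase, (Finset.mem_filter.mp hj).2, smul_eq_mul]
    simp only [eq_comm]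
  simp only [aVN, Pi.single_apply]
  rw [← Nat.cast_mul, ← Nat.cast_mul, key]
  push_cast
  ring

end ETilde

section Chi

variable {n k q : ℕ} {G : Matrix (Fin k) (Fin q) (ZMod 2)} {τ : Fin q → Fin n}

lemma hWeight_mem_Icc_of_mem_wt2Preimage {i j : Fin q} {x : Fin k → ZMod 2}
    (hx : x ∈ wt2Preimage G i j) : hWeight x ∈ Finset.Icc 1 k :=
  Finset.mem_Icc.mpr ⟨hWeight_pos (ne_zero_of_mem_wt2Preimage hx), hWeight_le x⟩

lemma chi2_eq_sum_card_filter (hrank : G.rank = k) (u : ℕ) (l m : Fin n) :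
    chi2 G τ u l m
      = ∑ p ∈ typedPairs τ l m, ((wt2Preimage G p.1 p.2).filter fun x => hWeight x = u).card := by
  simp only [Finset.card_filter_eq_ite_exists_of_card_le_one (card_wt2Preimage_le_one hrank _ _),
    ← Finset.card_filter, chi2, typedPairs, Finset.filter_filter, mem_wt2Preimage]
  congr 2
  ext p
  constructor
  · rintro ⟨h1, h2, h3, x, hw, hx⟩; exact ⟨⟨h1, h2, h3⟩, x, hx, hw⟩
  · rintro ⟨⟨h1, h2, h3⟩, x, hx, hw⟩; exact ⟨h1, h2, h3, x, hw, hx⟩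

lemma sum_chi2_mul_pow (hrank : G.rank = k) (l m : Fin n) (ε : ℝ) :
    ∑ u ∈ Finset.Icc 1 k, (chi2 G τ u l m : ℝ) * ε ^ u
      = ∑ p ∈ typedPairs τ l m, ∑ x ∈ wt2Preimage G p.1 p.2, ε ^ hWeight x := by
  simp only [chi2_eq_sum_card_filter hrank, Nat.cast_sum, Finset.sum_mul]
  rw [Finset.sum_comm]
  refine Finset.sum_congr rfl fun p _ => ?_
  rw [← Finset.sum_fiberwise_of_maps_to fun x hx => hWeight_mem_Icc_of_mem_wt2Preimage hx]
  refine Finset.sum_congr rfl fun u _ => ?_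
  rw [Finset.sum_congr rfl fun x hx => by rw [(Finset.mem_filter.mp hx).2], Finset.sum_const,
    nsmul_eq_mul]

lemma chi2_eq_zero_of_not_hasMinDistEq2 (hmin : HasMinDistGE2 G) (h2 : ¬HasMinDistEq2 G)
    (u : ℕ) (l m : Fin n) : chi2 G τ u l m = 0 :=
  Finset.card_eq_zero.mpr <| Finset.filter_eq_empty_iff.mpr fun _ _ ⟨hne, _, _, x, _, hx⟩ =>
    h2 ⟨hmin, x, by rw [hx, hWeight_wt2vec hne]⟩

end Chi

lemma sum_piFinset_mul_prod_update {n : ℕ} (B : Fin n → ℕ) {m : Fin n} (hB : ∀ l ≠ m, 0 < B l)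
    (E : Fin n → ℕ → ℕ) (a : (Fin n → ℕ) → ℝ) (x : ℝ) :
    ∑ t ∈ Fintype.piFinset (fun l => Finset.range (B l)),
        (∏ l, (1 - Function.update (fun _ => (1 : ℝ)) m x l) ^ t l
          * Function.update (fun _ => (1 : ℝ)) m x l ^ E l (t l)) * a t
      = ∑ s ∈ Finset.range (B m), (1 - x) ^ s * x ^ E m s * a (Pi.single m s) := by
  set f : (Fin n → ℕ) → ℝ := fun t =>
    (∏ l ∈ Finset.univ.erase m, (0 : ℝ) ^ t l) * ((1 - x) ^ t m * x ^ E m (t m)) * a t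
  have hprod : ∀ t : Fin n → ℕ,
      (∏ l, (1 - Function.update (fun _ => (1 : ℝ)) m x l) ^ t l
        * Function.update (fun _ => (1 : ℝ)) m x l ^ E l (t l)) * a t = f t := fun t => by
    rw [← Finset.mul_prod_erase _ _ (Finset.mem_univ m), Function.update_self,
      Finset.prod_congr rfl fun l hl => by
        rw [Function.update_of_ne (Finset.ne_of_mem_erase hl), sub_self, one_pow, mul_one]]
    simp only [f]
    ring
  have hsingle : ∀ s, f (Pi.single m s) = (1 - x) ^ s * x ^ E m s * a (Pi.single m s) :=
    fun s => by
      simp only [f, Pi.single_eq_same]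
      rw [Finset.prod_eq_one fun l hl => by rw [Pi.single_eq_of_ne (Finset.ne_of_mem_erase hl),
        pow_zero], one_mul]
  simp_rw [hprod, ← hsingle]
  rw [← Finset.sum_image (f := f) fun s _ t _ h => Pi.single_injective m h]
  refine (Finset.sum_subset (fun t ht => ?_) fun t htB ht => ?_).symm
  · obtain ⟨s, hs, rfl⟩ := Finset.mem_image.mp ht
    refine Fintype.mem_piFinset.mpr fun l => ?_
    rcases eq_or_ne l m with rfl | hl
    · simpa using hs
    · simpa [Pi.single_eq_of_ne hl] using hB l hl
  · obtain ⟨l, hl, htl⟩ : ∃ l ≠ m, t l ≠ 0 := by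
      by_contra! h
      refine ht (Finset.mem_image.mpr ⟨t m, Fintype.mem_piFinset.mp htB m, funext fun l => ?_⟩)
      rcases eq_or_ne l m with rfl | hl
      · simp
      · simp [Pi.single_eq_of_ne hl, h l hl]
    simp only [f]
    rw [Finset.prod_eq_zero (Finset.mem_erase.mpr ⟨hl, Finset.mem_univ l⟩) (zero_pow htl)]
    ring

lemma hasDerivAt_sum_one_sub_pow_mul_pow (b : ℕ) (c : ℕ → ℝ) :
    HasDerivAt (fun x : ℝ => ∑ s ∈ Finset.range b, (1 - x) ^ s * x ^ (b - 1 - s) * c s)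
      (((b - 1 : ℕ) : ℝ) * c 0 - if 1 < b then c 1 else 0) 1 := by
  have hterm : ∀ s, HasDerivAt (fun x : ℝ => (1 - x) ^ s * x ^ (b - 1 - s) * c s)
      ((if s = 0 then ((b - 1 : ℕ) : ℝ) * c 0 else 0) - if s = 1 then c 1 else 0) 1 := fun s => by
    refine (((((hasDerivAt_id (1 : ℝ)).const_sub 1).pow s).mul
      (hasDerivAt_pow (b - 1 - s) (1 : ℝ))).mul_const (c s)).congr_deriv ?_
    rcases s with _ | _ | s <;> simp
  refine (HasDerivAt.fun_sum fun s _ => hterm s).congr_deriv ?_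
  rw [Finset.sum_sub_distrib, Finset.sum_ite_eq', Finset.sum_ite_eq']
  rcases b with _ | _ | b <;> simp

/-- Only `z ≥ w` contribute; after `z = w + j` the sum is `ε ^ w (ε + (1 - ε)) ^ (k - w)`. -/
lemma sum_range_pow_mul_one_sub_pow_mul_choose {R : Type*} [CommRing R] (ε : R) {w k : ℕ}
    (hw : w ≤ k) :
    ∑ z ∈ Finset.range (k + 1), ε ^ z * (1 - ε) ^ (k - z) * ((k - w).choose (k - z) : R)
      = ε ^ w := by
  obtain ⟨d, rfl⟩ := Nat.exists_eq_add_of_le hw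
  rw [show w + d + 1 = w + (d + 1) by ring, Finset.sum_range_add,
    Finset.sum_eq_zero fun z hz => by
      rw [Nat.choose_eq_zero_of_lt (by simp at hz; omega), Nat.cast_zero, mul_zero],
    zero_add, Nat.add_sub_cancel_left]
  have hterm : ∀ j ∈ Finset.range (d + 1),
      ε ^ (w + j) * (1 - ε) ^ (w + d - (w + j)) * (d.choose (w + d - (w + j)) : R)
        = ε ^ w * (ε ^ j * (1 - ε) ^ (d - j) * (d.choose j : R)) := fun j hj => by
    rw [Nat.add_sub_add_left, Nat.choose_symm (by simpa [Nat.lt_succ_iff] using hj), pow_add]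
    ring
  rw [Finset.sum_congr rfl hterm, ← Finset.mul_sum, ← add_pow, add_sub_cancel, one_pow, mul_one]

section Derivative

variable {n k q : ℕ} {G : Matrix (Fin k) (Fin q) (ZMod 2)} {τ : Fin q → Fin n}

variable (G τ) in
lemma hasDerivAt_IEV_update {e : Fin n} (he : 1 ≤ colCount τ e) (m : Fin n) (ε : ℝ) :
    HasDerivAt (fun x => IEV G τ e (Function.update (fun _ => (1 : ℝ)) m x) ε)
      (-(1 / (colCount τ e : ℝ) * ∑ z ∈ Finset.range (k + 1), ε ^ z * (1 - ε) ^ (k - z) *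
        ((((if m = e then colCount τ m else colCount τ m + 1) - 1 : ℕ) : ℝ)
            * aVN G τ e (Pi.single m 0) z
          - if 1 < (if m = e then colCount τ m else colCount τ m + 1)
            then aVN G τ e (Pi.single m 1) z else 0))) 1 := by
  set b := if m = e then colCount τ m else colCount τ m + 1
  have hline : ∀ x z, ∑ t ∈ tRange (colCount τ) e,
      (∏ l, (1 - Function.update (fun _ => (1 : ℝ)) m x l) ^ t l
        * Function.update (fun _ => (1 : ℝ)) m x l
          ^ (colCount τ l - t l - if l = e then 1 else 0)) * aVN G τ e t z
      = ∑ s ∈ Finset.range b, (1 - x) ^ s * x ^ (b - 1 - s) * aVN G τ e (Pi.single m s) z :=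
    fun x z => by
      rw [tRange, sum_piFinset_mul_prod_update _ (fun l _ => by
          split_ifs with h; exacts [h ▸ he, Nat.succ_pos _])
        (fun l s => colCount τ l - s - if l = e then 1 else 0)]
      refine Finset.sum_congr rfl fun s _ => ?_
      congr 3
      simp only [b]
      split_ifs <;> omega
  simp only [IEV, hline]
  exact ((HasDerivAt.fun_sum fun z _ => (hasDerivAt_sum_one_sub_pow_mul_pow b
    fun s => aVN G τ e (Pi.single m s) z).const_mul _).const_mul _).const_sub 1

lemma hasDerivAt_IEV_update_eq_sum_chi2 (hrank : G.rank = k) (hmin : HasMinDistGE2 G)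
    {e : Fin n} (he : 1 ≤ colCount τ e) (m : Fin n) (ε : ℝ) :
    HasDerivAt (fun x => IEV G τ e (Function.update (fun _ => (1 : ℝ)) m x) ε)
      (1 / (colCount τ e : ℝ) * ∑ u ∈ Finset.Icc 1 k, (chi2 G τ u e m : ℝ) * ε ^ u) 1 := by
  refine (hasDerivAt_IEV_update G τ he m ε).congr_deriv ?_
  set b := if m = e then colCount τ m else colCount τ m + 1
  have hb : 1 < b ↔ (if m = e then 1 else 0) < colCount τ m := by
    simp only [b]; split_ifs <;> omega
  have hcoef : ∀ z, ((b - 1 : ℕ) : ℝ) * aVN G τ e (Pi.single m 0) z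
        - (if 1 < b then aVN G τ e (Pi.single m 1) z else 0)
      = -∑ p ∈ typedPairs τ e m, ∑ x ∈ wt2Preimage G p.1 p.2,
          ((k - hWeight x).choose (k - z) : ℝ) := fun z => by
    rw [Pi.single_zero, aVN_zero_s4 hrank hmin he, mul_zero, zero_sub, neg_inj]
    split_ifs with h1b
    · exact aVN_single_one hrank hmin he (hb.mp h1b) z
    · exact (Finset.sum_eq_zero fun p hp =>
        absurd (hb.mpr (lt_colCount_of_mem_typedPairs hp)) h1b).symm
  simp only [hcoef, mul_neg, Finset.sum_neg_distrib, neg_neg, sum_chi2_mul_pow hrank,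
    Finset.mul_sum]
  rw [Finset.sum_comm]
  refine Finset.sum_congr rfl fun p _ => ?_
  rw [Finset.sum_comm]
  refine Finset.sum_congr rfl fun x _ => ?_
  rw [← Finset.mul_sum, sum_range_pow_mul_one_sub_pow_mul_choose _ (hWeight_le x)]

end Derivative

lemma Pmat_apply_eq_sum_filter {n : ℕ} (V : VNSide n) (hmin : ∀ γ, HasMinDistGE2 (V.vn γ).G)
    (ε : ℝ) (l m : Fin n) :
    Pmat V ε l m = ∑ γ ∈ Finset.univ.filter (fun γ => 0 < V.lam γ l), V.lam γ l *
      (1 / (colCount (V.vn γ).τ l : ℝ) *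
        ∑ u ∈ Finset.Icc 1 (V.vn γ).k, (chi2 (V.vn γ).G (V.vn γ).τ u l m : ℝ) * ε ^ u) := by
  rw [Pmat, Matrix.of_apply, Finset.sum_filter]
  refine Finset.sum_congr rfl fun γ _ => ?_
  by_cases h2 : HasMinDistEq2 (V.vn γ).G
  · rw [if_pos h2]
    split_ifs with hpos
    · ring
    · simp [le_antisymm (not_lt.mp hpos) (V.lam_nonneg γ l)]
  · simp [h2, chi2_eq_zero_of_not_hasMinDistEq2 (hmin γ) h2]

theorem deriv_IEVagg_eq_Pmat_general {n : ℕ} (V : VNSide n) (hV : V.Good)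
    (ε : ℝ) (l m : Fin n) :
    deriv (fun x : ℝ => IEVagg V l (Function.update (fun _ => (1 : ℝ)) m x) ε) 1
      = Pmat V ε l m := by
  have hderiv := HasDerivAt.fun_sum (u := Finset.univ.filter fun γ => 0 < V.lam γ l)
    fun γ hγ => (hasDerivAt_IEV_update_eq_sum_chi2 (hV γ).1 (hV γ).2
      ((V.lam_pos_iff γ l).mp (Finset.mem_filter.mp hγ).2) m ε).const_mul (V.lam γ l)
  exact hderiv.deriv.trans (Pmat_apply_eq_sum_filter V (fun γ => (hV γ).2) ε l m).symm

/-- **VN-side derivative identity.** The partial derivative of the aggregate VN EXIT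
function `I_{EV,l}(·,ε)` with respect to its `m`-th argument, at the all-ones point,
equals `P^{l,m}(ε)`. -/
theorem deriv_IEVagg_eq_Pmat {n : ℕ} (hn : 1 ≤ n) (V : VNSide n) (hV : V.Good)
    (ε : ℝ) (hε : ε ∈ Set.Ioo (0 : ℝ) 1) (l m : Fin n) :
    deriv (fun x : ℝ => IEVagg V l (Function.update (fun _ => (1 : ℝ)) m x) ε) 1
      = Pmat V ε l m :=
  deriv_IEVagg_eq_Pmat_general V hV ε l m

end MET
end
end
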